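/- Let H be a group freely generated by a, g₁, …, g_l, let n be a nonzero integer, and for each i let tᵢ be the automorphism of H fixing a and all g_m with m ≠ i, and sending gᵢ to aⁿ gᵢ a⁻ⁿ. Then the images of t₁, …, t_{l-1} in Out(H) = Aut(H)/Inn(H) generate a free abelian subgroup isomorphic to ℤ^{l−1}. -/

import Mathlib

/-!
The `tᵢ` commute because each of them fixes `a` and moves only `gᵢ`, which it conjugates by a
power of `a`.

If `∏ tᵢ ^ cᵢ` (over `i < l - 1`) is conjugation by `w`, then `w` centralises `g_{l-1}` and
conjugates `gᵢ` as `a ^ (n cᵢ)` does. Send `a` to the rotation `r` and every `g_m` to the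
reflection `s` of the infinite dihedral group: the image of `w` commutes with `s`, hence so
does `r ^ (n cᵢ)`. Since `s r^k s = r^(-k)`, this forces `n cᵢ = 0`.
-/

namespace MulAut

variable {G : Type*} [Group G]

theorem zpow_apply_eq_self {e : MulAut G} {x : G} (h : e x = x) (d : ℤ) : (e ^ d) x = x :=
  zpow_mem (show e ∈ MulAction.stabilizer (MulAut G) x from h) d

theorem list_prod_apply_eq_self {L : List (MulAut G)} {x : G} (h : ∀ e ∈ L, e x = x) :
    L.prod x = x :=
  Subgroup.list_prod_mem (K := MulAction.stabilizer (MulAut G) x) h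

theorem commute_conj_of_apply_eq_self {e : MulAut G} {b : G} (h : e b = b) :
    Commute e (conj b) := by
  ext x
  simp [mul_apply, conj_apply, h]

theorem apply_conj_of_apply_eq_self {e : MulAut G} {b : G} (h : e b = b) (x : G) :
    e (conj b x) = conj b (e x) :=
  DFunLike.congr_fun (commute_conj_of_apply_eq_self h).eq x

theorem zpow_apply_eq_conj_zpow {e : MulAut G} {b x : G} (hb : e b = b) (hx : e x = conj b x)
    (d : ℤ) : (e ^ d) x = conj (b ^ d) x := by
  have hcomm : Commute (conj b) ((conj b)⁻¹ * e) :=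
    ((Commute.refl _).inv_left).mul_right (commute_conj_of_apply_eq_self hb).symm
  have hfix : ((conj b)⁻¹ * e) x = x := by rw [mul_apply, hx, inv_apply_self]
  calc (e ^ d) x = ((conj b) ^ d * ((conj b)⁻¹ * e) ^ d) x := by
        rw [← hcomm.mul_zpow, mul_inv_cancel_left]
    _ = conj (b ^ d) x := by rw [mul_apply, zpow_apply_eq_self hfix, map_zpow]

theorem prod_ofFn_apply_of_forall_ne {N : ℕ} (F : Fin N → MulAut G) {y z : G} (j : Fin N)
    (hy : ∀ k ≠ j, F k y = y) (hz : ∀ k ≠ j, F k z = z) (hj : F j y = z) :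
    (List.ofFn F).prod y = z := by
  induction N with
  | zero => exact j.elim0
  | succ N ih =>
    rw [List.ofFn_succ, List.prod_cons, mul_apply]
    rcases Fin.eq_zero_or_eq_succ j with rfl | ⟨j, rfl⟩
    · rw [list_prod_apply_eq_self, hj]
      simpa [List.forall_mem_ofFn_iff] using fun k => hy k.succ (Fin.succ_ne_zero k)
    · rw [ih (fun k => F k.succ) j (fun k hk => hy _ (Fin.succ_injective _ |>.ne hk))
        (fun k hk => hz _ (Fin.succ_injective _ |>.ne hk)) hj]
      exact hz 0 (Fin.succ_ne_zero j).symm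

end MulAut

namespace FreeGroup

variable {α : Type*}

theorem mulAut_ext {e f : MulAut (FreeGroup α)} (h : ∀ x, e (of x) = f (of x)) : e = f :=
  MulEquiv.toMonoidHom_injective (ext_hom _ _ h)

theorem eq_zero_of_conj_eq_conj_zpow [DecidableEq α] {p q s : α} (hq : q ≠ p) (hs : s ≠ p)
    {w : FreeGroup α} {m : ℤ} (hw_s : MulAut.conj w (of s) = of s)
    (hw_q : MulAut.conj w (of q) = MulAut.conj (of p ^ m) (of q)) : m = 0 := by
  obtain ⟨ρ, hρ⟩ : ∃ ρ : FreeGroup α →* DihedralGroup 0,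
      ∀ x, ρ (of x) = if x = p then DihedralGroup.r 1 else DihedralGroup.sr 0 :=
    ⟨lift _, fun _ => lift_apply_of⟩
  rw [MulAut.conj_apply] at hw_s
  rw [MulAut.conj_apply, MulAut.conj_apply] at hw_q
  apply_fun ρ at hw_s hw_q
  simp only [_root_.map_mul, _root_.map_inv, _root_.map_zpow, hρ, if_neg hq, if_neg hs, if_pos,
    DihedralGroup.r_one_zpow] at hw_s hw_q
  rw [hw_s] at hw_q
  simp only [DihedralGroup.r_mul_sr, DihedralGroup.inv_r, DihedralGroup.sr_mul_r,
    DihedralGroup.sr.injEq] at hw_q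
  change (0 : ℤ) = 0 - m + -m at hw_q
  omega

theorem commute_of_conj_one_generator {ι : Type*} {n : ℤ}
    {t : ι → MulAut (FreeGroup (Option ι))} (hta : ∀ i, t i (of none) = of none)
    (htfix : ∀ i m, m ≠ i → t i (of (some m)) = of (some m))
    (htg : ∀ i, t i (of (some i)) = MulAut.conj (of none ^ n) (of (some i))) (i j : ι) :
    Commute (t i) (t j) := by
  obtain rfl | hij := eq_or_ne i j
  · exact Commute.refl _
  have hb : ∀ k, t k (of none ^ n) = of none ^ n := fun k => by rw [_root_.map_zpow, hta]
  refine mulAut_ext fun x => ?_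
  simp only [MulAut.mul_apply]
  rcases x with _ | m
  · rw [hta, hta, hta]
  obtain rfl | hmi := eq_or_ne m i
  · rw [htfix _ _ hij, htg, MulAut.apply_conj_of_apply_eq_self (hb j), htfix _ _ hij]
  obtain rfl | hmj := eq_or_ne m j
  · rw [htfix _ _ hmi, htg, MulAut.apply_conj_of_apply_eq_self (hb i), htfix _ _ hmi]
  · rw [htfix _ _ hmi, htfix _ _ hmj, htfix _ _ hmi]

end FreeGroup

open FreeGroup MulAut

/-- With `H` free on `a, g₁, …, g_l` and `tᵢ` the automorphism fixing `a`
and the `g_m`, `m ≠ i`, and sending `gᵢ` to `aⁿ gᵢ a⁻ⁿ` (`n ≠ 0`), the images of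
`t₁, …, t_{l-1}` in `Out(H) = Aut(H)/Inn(H)` generate a free abelian subgroup `≅ ℤ^{l-1}`:
the `tᵢ` pairwise commute, and a product `∏ tᵢ^{cᵢ}` over `i < l-1` is an inner
automorphism (i.e. lies in the range of `MulAut.conj`) only when all exponents vanish. -/
theorem stmt_9 {l : ℕ} (n : ℤ) (hn : n ≠ 0)
    (a : FreeGroup (Option (Fin l))) (g : Fin l → FreeGroup (Option (Fin l)))
    (ha : a = FreeGroup.of none) (hg : ∀ i, g i = FreeGroup.of (some i))
    (t : Fin l → MulAut (FreeGroup (Option (Fin l))))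
    (hta : ∀ i, t i a = a)
    (htfix : ∀ i m, m ≠ i → t i (g m) = g m)
    (htg : ∀ i, t i (g i) = a ^ n * g i * (a ^ n)⁻¹) :
    (∀ i j, Commute (t i) (t j)) ∧
    (∀ c : Fin (l - 1) → ℤ,
      (List.ofFn (fun i : Fin (l - 1) =>
        (t (Fin.castLE (Nat.sub_le l 1) i)) ^ (c i))).prod ∈
        (MulAut.conj : FreeGroup (Option (Fin l)) →*
          MulAut (FreeGroup (Option (Fin l)))).range →
      c = 0) := by
  subst ha
  obtain rfl : g = fun i => of (some i) := funext hg
  refine ⟨commute_of_conj_one_generator hta htfix htg, fun c ⟨w, hw⟩ => funext fun i => ?_⟩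
  have ha_fixed : ∀ k (e : ℤ), t k (of none ^ e) = of none ^ e := fun k e => by
    rw [map_zpow, hta]
  set ι : Fin (l - 1) → Fin l := Fin.castLE (Nat.sub_le l 1)
  let last : Fin l := ⟨l - 1, by have := i.isLt; omega⟩
  have hw_last : conj w (of (some last)) = of (some last) := by
    rw [hw]
    refine list_prod_apply_eq_self (List.forall_mem_ofFn_iff.mpr fun k => ?_)
    refine zpow_apply_eq_self (htfix _ _ fun h => ?_) _
    exact (ne_of_lt k.isLt) (congrArg Fin.val h).symm
  have hw_gi : conj w (of (some (ι i))) = conj (of none ^ (n * c i)) (of (some (ι i))) := by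
    have hgi_fixed : ∀ k ≠ i, (t (ι k) ^ c k) (of (some (ι i))) =
        of (some (ι i)) := fun k hk =>
      zpow_apply_eq_self (htfix _ _ ((Fin.castLE_injective (Nat.sub_le l 1)).ne hk.symm)) _
    rw [hw]
    refine prod_ofFn_apply_of_forall_ne _ i hgi_fixed (fun k hk => ?_) ?_
    · rw [apply_conj_of_apply_eq_self (zpow_apply_eq_self (ha_fixed _ _) _), hgi_fixed k hk]
    · rw [zpow_mul]
      exact zpow_apply_eq_conj_zpow (ha_fixed _ n) (htg _) _
  exact (mul_eq_zero.mp (eq_zero_of_conj_eq_conj_zpow (Option.some_ne_none _)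
    (Option.some_ne_none _) hw_last hw_gi)).resolve_left hn
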